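/- Let μ be a measure on a measurable subspace X of the extended real line, n ∈ ℕ, and X₁,…,X_n the coordinate projections on Xⁿ. Then the pair (min_{i=1}^n X_i, max_{i=1}^n X_i) is complete for the model {μ(·|I)^{⊗n} : I an interval in X with 0 < μ(I) < ∞}, and is also sufficient if μ is σ-finite. -/

import Mathlib

/-!
The σ-algebra of `(min, max)` is generated by the boxes `{a ≤ min, max ≤ b} = (S ∩ [a, b])ⁿ`, and
`μ(·|I)^{⊗n}` restricted to such a box is a multiple of `μ(·|I ∩ [a, b])^{⊗n}`, which is again a
member of the model unless the multiple is zero. So a statistic with mean zero under the whole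
model integrates to zero over every box, hence over every `(min, max)`-measurable set, hence
vanishes almost surely.

For sufficiency, `Iⁿ` is `(min, max)`-measurable, so every member of the model has the
`(min, max)`-measurable density `μ(I)⁻ⁿ 1_{Iⁿ}` with respect to `μ^{⊗n}`. Although `μ^{⊗n}` need
not be σ-finite on `(min, max)`-measurable sets, it is so on a `(min, max)`-measurable part that
contains every `Iⁿ` up to a null set, and the conditional expectation of `1_A` under `μ^{⊗n}`
restricted to that part is a common version of `P(A | min, max)`.
-/

open MeasureTheory

/-- A sub-σ-algebra `C` of `mX` is (Lehmann–Scheffé) complete for the model `M`: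
every `C`-measurable real function, integrable with respect to every member of `M`
and with expectation `0` under every member, vanishes `P`-a.s. for every `P ∈ M`. -/
def IsLSComplete {X : Type*} (mX : MeasurableSpace X) (C : MeasurableSpace X)
    (M : Set (@Measure X mX)) : Prop :=
  ∀ h : X → ℝ, Measurable[C] h → (∀ P ∈ M, Integrable h P) →
    (∀ P ∈ M, ∫ x, h x ∂P = 0) → ∀ P ∈ M, h =ᵐ[P] 0

/-- A sub-σ-algebra `C` of `mX` is sufficient for the model `M`: for every
`mX`-measurable set `A` there is a single `C`-measurable version of the conditional
probability of `A` given `C`, valid simultaneously for all `P ∈ M`. -/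
def IsLSSufficient {X : Type*} (mX : MeasurableSpace X) (C : MeasurableSpace X)
    (M : Set (@Measure X mX)) : Prop :=
  ∀ A : Set X, MeasurableSet[mX] A →
    ∃ g : X → ℝ, Measurable[C] g ∧
      ∀ P ∈ M, ∀ s : Set X, MeasurableSet[C] s →
        ∫ x in s, g x ∂P = (P (s ∩ A)).toReal

/-- The conditional law `μ(·|E) = μ(· ∩ E)/μ(E)`. -/
noncomputable def condLaw {X : Type*} [mX : MeasurableSpace X] (μ : Measure X)
    (E : Set X) : Measure X :=
  (μ E)⁻¹ • μ.restrict E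

open MeasurableSpace Set ProbabilityTheory
open scoped ENNReal NNReal

theorem condLaw_eq_cond {X : Type*} [MeasurableSpace X] (μ : Measure X) (E : Set X) :
    condLaw μ E = μ[|E] :=
  rfl

theorem ordConnected_iff_forall_le_le {β : Type*} [Preorder β] {I : Set β} :
    I.OrdConnected ↔ ∀ x ∈ I, ∀ z ∈ I, ∀ y, x ≤ y → y ≤ z → y ∈ I :=
  ⟨fun h _ hx _ hz _ hxy hyz => h.out hx hz ⟨hxy, hyz⟩,
    fun h => ⟨fun x hx z hz y hy => h x hx z hz y hy.1 hy.2⟩⟩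

section Measures

variable {X : Type*} [MeasurableSpace X]

theorem restrict_eq_smul_cond (ν : Measure X) {B : Set X} (hB : ν B ≠ ∞) :
    ν.restrict B = ν B • ν[|B] := by
  rcases eq_or_ne (ν B) 0 with h0 | h0
  · simp [Measure.restrict_eq_zero.mpr h0, h0]
  · rw [ProbabilityTheory.cond, smul_smul, ENNReal.mul_inv_cancel h0 hB, one_smul]

theorem pi_const_smul {ι : Type*} [Fintype ι] (ν : Measure X) [SigmaFinite ν] {c : ℝ≥0∞}
    (hc : c ≠ ∞) :
    Measure.pi (fun _ : ι => c • ν) = c ^ Fintype.card ι • Measure.pi fun _ : ι => ν := by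
  lift c to ℝ≥0 using hc
  have : SigmaFinite ((c : ℝ≥0∞) • ν) := inferInstanceAs (SigmaFinite (c • ν))
  refine Measure.pi_eq fun _ _ => ?_
  simp [Finset.prod_mul_distrib]

theorem pi_cond_restrict_pi {ι : Type*} [Fintype ι] (μ : Measure X) {I B : Set X}
    (hI : MeasurableSet I) (hB : MeasurableSet B) (hμI : μ I ≠ ∞) :
    (Measure.pi fun _ : ι => μ[|I]).restrict (univ.pi fun _ => B) =
      μ[B|I] ^ Fintype.card ι • Measure.pi fun _ : ι => μ[|I ∩ B] := by
  rw [Measure.restrict_pi_pi, ← cond_cond_eq_cond_inter' hI hB hμI,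
    ← pi_const_smul _ (measure_ne_top _ _)]
  congr with _ : 1
  exact restrict_eq_smul_cond _ (measure_ne_top _ _)

theorem pi_cond_eq_smul_restrict {ι : Type*} [Fintype ι] (μ : Measure X) [SigmaFinite μ]
    {I : Set X} (hμI : μ I ≠ 0) :
    Measure.pi (fun _ : ι => μ[|I]) =
      (μ I)⁻¹ ^ Fintype.card ι • (Measure.pi fun _ : ι => μ).restrict (univ.pi fun _ => I) := by
  rw [Measure.restrict_pi_pi, ← pi_const_smul _ (ENNReal.inv_ne_top.mpr hμI)]
  rfl

end Measures

section SubSigmaAlgebra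

variable {X : Type*} {m m0 : MeasurableSpace X}

instance sFinite_trim (μ : Measure X) [SFinite μ] (hm : m ≤ m0) : SFinite (μ.trim hm) := by
  refine ⟨⟨fun k => (sfiniteSeq μ k).trim hm, fun _ => inferInstance, ?_⟩⟩
  refine @Measure.ext _ m _ _ fun s hs => ?_
  rw [trim_measurableSet_eq hm hs, Measure.sum_apply _ hs]
  conv_lhs => rw [← sum_sfiniteSeq μ, Measure.sum_apply _ (hm s hs)]
  simp only [trim_measurableSet_eq hm hs]

theorem restrict_restrict_sigmaFiniteSet_trim (μ : Measure X) [SFinite μ] (hm : m ≤ m0)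
    {Q : Set X} (hQ : MeasurableSet[m] Q) (hμQ : μ Q ≠ ∞) :
    (μ.restrict (μ.trim hm).sigmaFiniteSet).restrict Q = μ.restrict Q := by
  have hσ : MeasurableSet[m] (μ.trim hm).sigmaFiniteSet := measurableSet_sigmaFiniteSet
  have hnull : μ (Q \ (μ.trim hm).sigmaFiniteSet) = 0 := by
    have hfin : μ.trim hm (Q \ (μ.trim hm).sigmaFiniteSet) ≠ ∞ := by
      rw [trim_measurableSet_eq hm (hQ.diff hσ)]
      exact ne_top_of_le_ne_top hμQ (measure_mono sdiff_subset)
    rw [← trim_measurableSet_eq hm (hQ.diff hσ)]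
    exact (measure_eq_zero_or_top_of_subset_compl_sigmaFiniteSet fun _ hx => hx.2).resolve_right
      hfin
  rw [Measure.restrict_restrict (hm Q hQ)]
  refine Measure.restrict_congr_set (ae_eq_set.mpr ⟨?_, by rwa [sdiff_self_inter]⟩)
  rw [sdiff_eq_empty.mpr inter_subset_left, measure_empty]

instance sigmaFinite_trim_restrict_sigmaFiniteSet (μ : Measure X) [SFinite μ] (hm : m ≤ m0) :
    SigmaFinite ((μ.restrict (μ.trim hm).sigmaFiniteSet).trim hm) := by
  rw [← restrict_trim hm μ measurableSet_sigmaFiniteSet]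
  infer_instance

theorem setIntegral_eq_zero_of_isPiSystem {μ : Measure X} {f : X → ℝ} {𝒞 : Set (Set X)}
    (hm : m ≤ m0) (hgen : m = generateFrom 𝒞)
    (h𝒞 : IsPiSystem 𝒞) (hf : Integrable f μ) (hfμ : ∫ x, f x ∂μ = 0)
    (h𝒞f : ∀ t ∈ 𝒞, ∫ x in t, f x ∂μ = 0) {t : Set X} (ht : MeasurableSet[m] t) :
    ∫ x in t, f x ∂μ = 0 := by
  induction t, ht using MeasurableSpace.induction_on_inter hgen h𝒞 with
  | empty => simp
  | basic t ht => exact h𝒞f t ht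
  | compl t htm ht =>
    rw [← integral_add_compl (hm t htm) hf, ht, zero_add] at hfμ
    exact hfμ
  | iUnion f hdisj hfm hf' =>
    rw [integral_iUnion (fun i => hm _ (hfm i)) hdisj hf.integrableOn]
    simp [hf']

theorem lintegral_condLExp_withDensity (hm : m ≤ m0) (μ : Measure X) [SigmaFinite (μ.trim hm)]
    {f g : X → ℝ≥0∞} (hf : Measurable f) (hg : Measurable[m] g) :
    ∫⁻ x, μ⁻[f|m] x ∂(μ.withDensity g) = ∫⁻ x, f x ∂(μ.withDensity g) := by
  have hg' : Measurable g := hg.mono hm le_rfl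
  have hswap : ∀ h : X → ℝ≥0∞, Measurable h →
      ∫⁻ x, h x ∂(μ.withDensity g) = ∫⁻ x, g x ∂((μ.withDensity h).trim hm) := by
    intro h hh
    rw [lintegral_trim hm hg, lintegral_withDensity_eq_lintegral_mul _ hg' hh,
      lintegral_withDensity_eq_lintegral_mul _ hh hg', mul_comm]
  have htrim : (μ.withDensity μ⁻[f|m]).trim hm = (μ.withDensity f).trim hm := by
    refine @Measure.ext _ m _ _ fun s hs => ?_
    rw [trim_measurableSet_eq hm hs, trim_measurableSet_eq hm hs, withDensity_apply _ (hm s hs),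
      withDensity_apply _ (hm s hs), setLIntegral_condLExp hm μ f hs]
  rw [hswap _ (measurable_condLExp' m μ f), hswap f hf, htrim]

theorem isLSSufficient_of_forall_eq_withDensity (hm : m ≤ m0) (ν : Measure X)
    [SigmaFinite (ν.trim hm)] {M : Set (Measure X)}
    (hM : ∀ P ∈ M, ∃ u : X → ℝ≥0∞, Measurable[m] u ∧ P = ν.withDensity u) :
    IsLSSufficient m0 m M := by
  intro A hA
  set E := ν⁻[A.indicator 1|m]
  have hE_le : E ≤ᵐ[ν] 1 := by
    have h1 : A.indicator (1 : X → ℝ≥0∞) ≤ 1 := indicator_le fun _ _ => le_rfl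
    simpa only [condLExp_one hm] using condLExp_mono (mΩ := m) (ae_of_all ν h1)
  refine ⟨fun x => (E x).toReal, (measurable_condLExp m ν _).ennreal_toReal, ?_⟩
  intro P hP s hs
  obtain ⟨u, hu, rfl⟩ := hM P hP
  have hac : (ν.withDensity u).restrict s ≪ ν :=
    (Measure.absolutelyContinuous_of_le Measure.restrict_le_self).trans
      (withDensity_absolutelyContinuous ν u)
  rw [integral_eq_lintegral_of_nonneg_ae (ae_of_all _ fun _ => ENNReal.toReal_nonneg)
    (measurable_condLExp' m ν _).ennreal_toReal.aestronglyMeasurable]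
  congr 1
  calc ∫⁻ x in s, ENNReal.ofReal (E x).toReal ∂ν.withDensity u
      = ∫⁻ x in s, E x ∂ν.withDensity u :=
        lintegral_congr_ae (hac.ae_le (hE_le.mono fun x hx =>
          ENNReal.ofReal_toReal (ne_top_of_le_ne_top ENNReal.one_ne_top hx)))
    _ = ∫⁻ x in s, A.indicator 1 x ∂ν.withDensity u := by
        rw [restrict_withDensity (hm s hs), ← withDensity_indicator (hm s hs)]
        exact lintegral_condLExp_withDensity hm ν (measurable_one.indicator hA) (hu.indicator hs)
    _ = ν.withDensity u (s ∩ A) := by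
        rw [lintegral_indicator_one hA, Measure.restrict_apply hA, inter_comm]

end SubSigmaAlgebra

theorem Set.OrdConnected.exists_ordConnected_preimage_val {α : Type*} [Preorder α] {S : Set α}
    {I : Set S} (hI : I.OrdConnected) :
    ∃ J : Set α, J.OrdConnected ∧ Subtype.val ⁻¹' J = I := by
  refine ⟨upperClosure (Subtype.val '' I) ∩ lowerClosure (Subtype.val '' I),
    (upperClosure _).upper.ordConnected.inter (lowerClosure _).lower.ordConnected, ?_⟩
  ext y
  simp only [mem_preimage, mem_inter_iff, SetLike.mem_coe, mem_upperClosure, mem_lowerClosure,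
    exists_mem_image, Subtype.coe_le_coe]
  constructor
  · rintro ⟨⟨x, hx, hxy⟩, z, hz, hyz⟩
    exact hI.out hx hz ⟨hxy, hyz⟩
  · intro hy
    exact ⟨⟨y, hy, le_rfl⟩, y, hy, le_rfl⟩

section MinMax

variable {S : Set EReal} {ι : Type*}

theorem measurableSet_of_ordConnected {I : Set S} (hI : I.OrdConnected) : MeasurableSet I := by
  obtain ⟨J, hJ, rfl⟩ := hI.exists_ordConnected_preimage_val
  exact measurable_subtype_coe hJ.measurableSet

noncomputable def minMax (x : ι → S) : EReal × EReal :=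
  (⨅ i, (x i : EReal), ⨆ i, (x i : EReal))

theorem measurable_minMax [Countable ι] : Measurable (minMax : (ι → S) → EReal × EReal) :=
  (Measurable.iInf fun i => measurable_subtype_coe.comp (measurable_pi_apply i)).prodMk
    (Measurable.iSup fun i => measurable_subtype_coe.comp (measurable_pi_apply i))

theorem minMax_preimage_Ici_prod_Iic (a b : EReal) :
    (minMax : (ι → S) → EReal × EReal) ⁻¹' (Ici a ×ˢ Iic b) =
      univ.pi fun _ : ι => Subtype.val ⁻¹' Icc a b := by
  ext x
  simp [minMax, forall_and]

theorem comap_minMax_le [Countable ι] :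
    MeasurableSpace.comap (minMax : (ι → S) → EReal × EReal) inferInstance ≤
      MeasurableSpace.pi :=
  measurable_minMax.comap_le

theorem comap_minMax_eq_generateFrom :
    MeasurableSpace.comap (minMax : (ι → S) → EReal × EReal) inferInstance =
      generateFrom ((minMax ⁻¹' ·) '' image2 (· ×ˢ ·) (range Ici) (range Iic)) := by
  have hIci : generateFrom (range Ici) = (inferInstance : MeasurableSpace EReal) :=
    ((borel_eq_generateFrom_Ici EReal).symm.trans BorelSpace.measurable_eq.symm)
  have hIic : generateFrom (range Iic) = (inferInstance : MeasurableSpace EReal) :=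
    ((borel_eq_generateFrom_Iic EReal).symm.trans BorelSpace.measurable_eq.symm)
  rw [← comap_generateFrom, generateFrom_eq_prod hIci hIic
    ⟨fun _ => Ici ⊥, fun _ => mem_range_self _, by simp only [Ici_bot, iUnion_const]⟩
    ⟨fun _ => Iic ⊤, fun _ => mem_range_self _, by simp only [Iic_top, iUnion_const]⟩]

theorem measurableSet_comap_minMax_pi [Finite ι] [Nonempty ι] {I : Set S}
    (hI : I.OrdConnected) :
    MeasurableSet[MeasurableSpace.comap minMax inferInstance] (univ.pi fun _ : ι => I) := by
  obtain ⟨J, hJ, rfl⟩ := hI.exists_ordConnected_preimage_val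
  refine ⟨J ×ˢ J, hJ.measurableSet.prod hJ.measurableSet, ?_⟩
  ext x
  simp only [minMax, mem_preimage, mem_prod, mem_univ_pi]
  constructor
  · rintro ⟨hmin, hmax⟩ i
    exact hJ.out hmin hmax ⟨iInf_le _ i, le_iSup (fun i => (x i : EReal)) i⟩
  · intro hx
    obtain ⟨i, hi⟩ := exists_eq_ciInf_of_finite (f := fun i => (x i : EReal))
    obtain ⟨j, hj⟩ := exists_eq_ciSup_of_finite (f := fun i => (x i : EReal))
    exact ⟨hi ▸ hx i, hj ▸ hx j⟩

end MinMax

def intervalModel {S : Set EReal} (μ : Measure S) (ι : Type*) [Fintype ι] :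
    Set (Measure (ι → S)) :=
  {P | ∃ I : Set S, I.OrdConnected ∧ 0 < μ I ∧ μ I < ∞ ∧ P = Measure.pi fun _ : ι => μ[|I]}

section IntervalModel

variable {S : Set EReal} {ι : Type*} [Fintype ι]

theorem isLSComplete_minMax [Nonempty ι] (μ : Measure S) :
    IsLSComplete MeasurableSpace.pi (MeasurableSpace.comap minMax inferInstance)
      (intervalModel μ ι) := by
  intro h hh hint hzero P hP
  obtain ⟨I, hI, hpos, hfin, rfl⟩ := id hP
  have hIm := measurableSet_of_ordConnected hI
  have hbox : ∀ t ∈ (minMax ⁻¹' ·) '' image2 (· ×ˢ ·) (range Ici) (range Iic),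
      ∫ x in t, h x ∂(Measure.pi fun _ : ι => μ[|I]) = 0 := by
    rintro _ ⟨_, ⟨_, ⟨a, rfl⟩, _, ⟨b, rfl⟩, rfl⟩, rfl⟩
    dsimp only
    rw [minMax_preimage_Ici_prod_Iic]
    set B : Set S := Subtype.val ⁻¹' Icc a b
    have hB : MeasurableSet B := measurable_subtype_coe measurableSet_Icc
    rw [pi_cond_restrict_pi μ hIm hB hfin.ne, integral_smul_measure]
    rcases eq_or_ne (μ (I ∩ B)) 0 with h0 | h0
    · rw [cond_apply hIm, h0, mul_zero, zero_pow Fintype.card_ne_zero, ENNReal.toReal_zero,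
        zero_smul]
    · have hJ : (I ∩ B).OrdConnected :=
        hI.inter (ordConnected_Icc.preimage_mono (Subtype.mono_coe _))
      rw [hzero _ ⟨_, hJ, pos_iff_ne_zero.2 h0, (measure_mono inter_subset_left).trans_lt hfin,
        rfl⟩, smul_zero]
  refine ae_eq_of_forall_setIntegral_eq_of_sigmaFinite' comap_minMax_le
    (fun _ _ _ => (hint _ hP).integrableOn)
    (fun _ _ _ => integrableOn_zero) (fun s hs _ => ?_) hh.aestronglyMeasurable
    aestronglyMeasurable_const
  rw [setIntegral_eq_zero_of_isPiSystem comap_minMax_le comap_minMax_eq_generateFrom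
    ((isPiSystem_Ici.prod isPiSystem_Iic).comap minMax) (hint _ hP) (hzero _ hP) hbox hs]
  simp

theorem isLSSufficient_minMax [Nonempty ι] (μ : Measure S) [SigmaFinite μ] :
    IsLSSufficient MeasurableSpace.pi (MeasurableSpace.comap minMax inferInstance)
      (intervalModel μ ι) := by
  have hle := comap_minMax_le (S := S) (ι := ι)
  set ρ := Measure.pi fun _ : ι => μ
  refine isLSSufficient_of_forall_eq_withDensity hle (ρ.restrict (ρ.trim hle).sigmaFiniteSet) ?_
  rintro _ ⟨I, hI, hpos, hfin, rfl⟩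
  have hQ := measurableSet_comap_minMax_pi (ι := ι) hI
  have hρQ : ρ (univ.pi fun _ => I) ≠ ∞ := by
    rw [Measure.pi_pi, Finset.prod_const]
    exact ENNReal.pow_ne_top hfin.ne
  refine ⟨(univ.pi fun _ => I).indicator fun _ => (μ I)⁻¹ ^ Fintype.card ι,
    measurable_const.indicator hQ, ?_⟩
  rw [withDensity_indicator (hle _ hQ), withDensity_const,
    restrict_restrict_sigmaFiniteSet_trim ρ hle hQ hρQ, pi_cond_eq_smul_restrict μ hpos.ne']

end IntervalModel

/-- **Corollary (c).** On a measurable subspace `S` of the extended real line, the pair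
`(min_{i=1}^n Xᵢ, max_{i=1}^n Xᵢ)` is complete for the model
`{μ(·|I)^{⊗n} : I interval in S, 0 < μ(I) < ∞}`, and also sufficient if `μ` is σ-finite. -/
theorem min_max_complete_for_intervals
    (S : Set EReal) (μ : Measure S) (n : ℕ) (hn : 0 < n) :
    IsLSComplete MeasurableSpace.pi
        (MeasurableSpace.comap
          (fun x : Fin n → S => ((⨅ i, (x i : EReal), ⨆ i, (x i : EReal)) : EReal × EReal))
          inferInstance)
        {P : Measure (Fin n → S) | ∃ I : Set S,
          (∀ x ∈ I, ∀ z ∈ I, ∀ y : S, x ≤ y → y ≤ z → y ∈ I) ∧ 0 < μ I ∧ μ I < ⊤ ∧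
          P = Measure.pi fun _ : Fin n => condLaw μ I} ∧
      (SigmaFinite μ →
        IsLSSufficient MeasurableSpace.pi
          (MeasurableSpace.comap
            (fun x : Fin n → S => ((⨅ i, (x i : EReal), ⨆ i, (x i : EReal)) : EReal × EReal))
            inferInstance)
          {P : Measure (Fin n → S) | ∃ I : Set S,
            (∀ x ∈ I, ∀ z ∈ I, ∀ y : S, x ≤ y → y ≤ z → y ∈ I) ∧ 0 < μ I ∧ μ I < ⊤ ∧
            P = Measure.pi fun _ : Fin n => condLaw μ I}) := by
  have : Nonempty (Fin n) := ⟨⟨0, hn⟩⟩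
  simp only [condLaw_eq_cond, ← ordConnected_iff_forall_le_le]
  exact ⟨isLSComplete_minMax μ, fun _ => isLSSufficient_minMax μ⟩
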